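/- For every x > 0, A'(x)/x ≤ 5/8, where A'(x)/x = ((e^x - x)² - (1 + x²))/(4x³(1+e^x)²). -/

import Mathlib

/-!
After multiplying numerator and denominator by `e^{-x}/2`, the quotient becomes
`A'(x)/x = (sinh x - x) / (4 x³ (1 + cosh x))`. Comparing the power series termwise,
`sinh x - x = ∑ x^{2n+3}/(2n+3)! ≤ ∑ x³ x^{2n}/(2n)! = x³ cosh x` for `x ≥ 0`,
so the quotient is even below `1/4`.
-/

noncomputable def Afun (x : ℝ) : ℝ := -(Real.tanh (x/2))/(4*x)

open Real Nat

theorem Real.tanh_half_eq (x : ℝ) : tanh (x / 2) = (exp x - 1) / (exp x + 1) := by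
  have hsq : exp x = exp (x / 2) ^ 2 := by rw [← exp_nat_mul]; ring_nf
  rw [tanh_eq, exp_neg, hsq]
  field_simp

theorem Afun_eq_exp : Afun = fun x => (1 - exp x) / (4 * x * (exp x + 1)) := by
  funext x
  rw [Afun, tanh_half_eq, ← neg_div, neg_sub, div_div, mul_comm (exp x + 1)]

theorem hasDerivAt_Afun {x : ℝ} (hx : x ≠ 0) :
    HasDerivAt Afun (((exp x - x) ^ 2 - (1 + x ^ 2)) / (4 * x ^ 2 * (1 + exp x) ^ 2)) x := by
  have hnum : HasDerivAt (fun y => 1 - exp y) (-exp x) x := (hasDerivAt_exp x).const_sub 1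
  have hden : HasDerivAt (fun y => 4 * y * (exp y + 1)) (4 * (exp x + 1) + 4 * x * exp x) x := by
    simpa using ((hasDerivAt_id x).const_mul 4).fun_mul ((hasDerivAt_exp x).add_const 1)
  rw [Afun_eq_exp]
  refine (hnum.fun_div hden (by positivity)).congr_deriv ?_
  field_simp
  ring

theorem Real.sinh_sub_self_le_pow_three_mul_cosh {x : ℝ} (hx : 0 ≤ x) :
    sinh x - x ≤ x ^ 3 * cosh x := by
  have htail : HasSum (fun n : ℕ => x ^ (2 * n + 3) / (2 * n + 3)!) (sinh x - x) := by
    simpa [Finset.sum_range_one, mul_add, ← add_assoc] using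
      (hasSum_nat_add_iff' 1).2 (hasSum_sinh x)
  refine hasSum_le (fun n => ?_) htail ((hasSum_cosh x).mul_left (x ^ 3))
  rw [mul_div_assoc', ← pow_add, add_comm 3]
  gcongr
  omega

theorem exp_sub_sq_div_eq_sinh_sub_div (x : ℝ) :
    ((exp x - x) ^ 2 - (1 + x ^ 2)) / (4 * x ^ 3 * (1 + exp x) ^ 2)
      = (sinh x - x) / (4 * x ^ 3 * (1 + cosh x)) := by
  have hnum : (exp x - x) ^ 2 - (1 + x ^ 2) = 2 * exp x * (sinh x - x) := by
    rw [sinh_eq, exp_neg]; field_simp; ring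
  have hden : 4 * x ^ 3 * (1 + exp x) ^ 2 = 2 * exp x * (4 * x ^ 3 * (1 + cosh x)) := by
    rw [cosh_eq, exp_neg]; field_simp; ring
  rw [hnum, hden, mul_div_mul_left _ _ (by positivity)]

theorem sinh_sub_self_div_le_one_fourth {x : ℝ} (hx : 0 < x) :
    (sinh x - x) / (4 * x ^ 3 * (1 + cosh x)) ≤ 1 / 4 := by
  rw [div_le_iff₀ (by positivity)]
  nlinarith [sinh_sub_self_le_pow_three_mul_cosh hx.le, pow_pos hx 3, cosh_pos x]

theorem stmt4 (x : ℝ) (hx : 0 < x) :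
    deriv Afun x / x = ((Real.exp x - x)^2 - (1 + x^2))/(4*x^3*(1+Real.exp x)^2) ∧
    deriv Afun x / x ≤ 5/8 := by
  have hquot :
      deriv Afun x / x = ((exp x - x) ^ 2 - (1 + x ^ 2)) / (4 * x ^ 3 * (1 + exp x) ^ 2) := by
    rw [(hasDerivAt_Afun hx.ne').deriv, div_div]
    ring
  refine ⟨hquot, ?_⟩
  rw [hquot, exp_sub_sq_div_eq_sinh_sub_div]
  linarith [sinh_sub_self_div_le_one_fourth hx]
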